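/- Let n ≥ 1 and let f be an affine permutation of quasi-period n with Σ_{i=1}^n (f(i) − i) = 0. Then max_{1≤i≤n} (f(i) − i) = max_{1≤i≤n} c_i(f) and min_{1≤i≤n} (f(i) − i) = − max_{1≤i≤n} c_i(f⁻¹). -/

import Mathlib

/-!
Write `balance f p u` for the number of `j > p` with `f j ≤ u` minus the number of `j ≤ p` with
`f j > u`. Moving the cut `p` or the level `u` by one changes it by `∓1`, so
`balance f p u = u - p + κ` for a constant `κ`. Summing `-balance f p p`, the signed number of
arrows `j ↦ f j` crossing the cut after `p`, over the `n` cuts of a period counts every arrow of a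
period once per cut it crosses, which gives `-n κ = ∑ (f j - j) = 0`.

At `p = i`, `u = f i - 1` the identity reads `cᵢ(f) = f i - i + #{j < i | f j > f i}`. So the code
dominates the displacement, and at an index where the code is maximal the last set is empty,
because `j < i` and `f j > f i` force `c_j(f) > cᵢ(f)`. For the minimum apply this to `f⁻¹`,
using `balance f⁻¹ u p = -balance f p u`.
-/

open Finset Function

theorem Int.eq_add_zsmul_of_forall_add_one {M : Type*} [AddCommGroup M] {g : ℤ → M} {c : M}
    (h : ∀ x, g (x + 1) = g x + c) (x : ℤ) : g x = g 0 + x • c := by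
  induction x using Int.induction_on with
  | zero => simp
  | succ k ih => rw [h, ih, add_smul, one_smul, add_assoc]
  | pred k ih =>
    have hk := h (-k - 1)
    rw [sub_add_cancel] at hk
    rw [sub_smul, one_smul, ← add_sub_assoc, ← ih, hk, add_sub_cancel_right]

theorem Function.Periodic.sum_Ico_eq {M : Type*} [AddCommMonoid M] {g : ℤ → M} {n : ℤ}
    (hg : Periodic g n) (a : ℤ) : ∑ x ∈ Ico a (a + n), g x = ∑ x ∈ Ico 0 n, g x := by
  rcases le_or_gt n 0 with hn | hn
  · simp [Ico_eq_empty_of_le, hn]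
  have step : ∀ b, ∑ x ∈ Ico (b + 1) (b + 1 + n), g x = ∑ x ∈ Ico b (b + n), g x := by
    intro b
    rw [← insert_Ico_add_one_left_eq_Ico (by omega : b < b + n),
      add_right_comm, ← insert_Ico_right_eq_Ico_add_one (by omega : b + 1 ≤ b + n),
      sum_insert (by simp), sum_insert (by simp), hg, add_comm]
  induction a using Int.induction_on with
  | zero => simp
  | succ k ih => rw [step, ih]
  | pred k ih => rw [← ih, ← step, sub_add_cancel]

theorem sum_Ico_sum_Icc_comm_of_shift {M : Type*} [AddCommMonoid M] {n : ℤ} (φ : ℤ → ℤ → M)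
    (hφ : ∀ j p, φ (j + n) (p + n) = φ j p) (a B : ℤ) :
    ∑ p ∈ Ico a (a + n), ∑ j ∈ Icc (p - B) (p + B), φ j p =
      ∑ j ∈ Ico a (a + n), ∑ p ∈ Icc (j - B) (j + B), φ j p := by
  have hrow : ∀ p, ∑ j ∈ Icc (p - B) (p + B), φ j p = ∑ d ∈ Icc (-B) B, φ (p + d) p := fun p =>
    sum_nbij' (fun j => j - p) (fun d => p + d) (by intros; simp_all; omega)
      (by intros; simp_all; omega) (by intros; simp) (by intros; simp) (by intros; simp)
  have hcol : ∀ j, ∑ p ∈ Icc (j - B) (j + B), φ j p = ∑ d ∈ Icc (-B) B, φ (j - d + d) (j - d) :=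
    fun j => sum_nbij' (fun p => j - p) (fun d => j - d) (by intros; simp_all; omega)
      (by intros; simp_all; omega) (by intros; simp) (by intros; simp) (by intros; simp)
  simp only [hrow, hcol]
  rw [sum_comm, sum_comm (s := Ico a (a + n))]
  refine sum_congr rfl fun d _ => ?_
  have hper : Periodic (fun p => φ (p + d) p) n := fun p => by
    simpa [add_right_comm] using hφ (p + d) p
  have := sum_Ico_add' (fun p => φ (p + d) p) a (a + n) (-d)
  simp only [← sub_eq_add_neg] at this
  rw [this, add_sub_right_comm, hper.sum_Ico_eq, hper.sum_Ico_eq]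

theorem Function.Periodic.isGreatest_range_sup' {β : Type*} [LinearOrder β] {g : ℤ → β} {n : ℤ}
    (hg : Periodic g n) (hn : 0 < n) (h : (Icc 1 n).Nonempty) :
    IsGreatest (Set.range g) ((Icc 1 n).sup' h g) := by
  refine ⟨?_, ?_⟩
  · obtain ⟨i, -, hi⟩ := exists_mem_eq_sup' h g
    exact ⟨i, hi.symm⟩
  · rintro _ ⟨x, rfl⟩
    obtain ⟨y, hy, hxy⟩ := hg.exists_mem_Ico hn x 1
    rw [hxy]
    exact le_sup' g (by simp only [Set.mem_Ico] at hy; simp only [mem_Icc]; omega)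

theorem Function.Periodic.isLeast_range_inf' {β : Type*} [LinearOrder β] {g : ℤ → β} {n : ℤ}
    (hg : Periodic g n) (hn : 0 < n) (h : (Icc 1 n).Nonempty) :
    IsLeast (Set.range g) ((Icc 1 n).inf' h g) := by
  refine ⟨?_, ?_⟩
  · obtain ⟨i, -, hi⟩ := exists_mem_eq_inf' h g
    exact ⟨i, hi.symm⟩
  · rintro _ ⟨x, rfl⟩
    obtain ⟨y, hy, hxy⟩ := hg.exists_mem_Ico hn x 1
    rw [hxy]
    exact inf'_le g (by simp only [Set.mem_Ico] at hy; simp only [mem_Icc]; omega)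

namespace AffinePerm

variable {f : ℤ ≃ ℤ} {C : ℤ}

def rightBelow (f : ℤ ≃ ℤ) (p u : ℤ) : Set ℤ := {j | p < j ∧ f j ≤ u}

def leftAbove (f : ℤ ≃ ℤ) (p u : ℤ) : Set ℤ := {j | j ≤ p ∧ u < f j}

noncomputable def balance (f : ℤ ≃ ℤ) (p u : ℤ) : ℤ :=
  (rightBelow f p u).ncard - (leftAbove f p u).ncard

theorem abs_symm_sub_le (hC : ∀ x, |f x - x| ≤ C) (v : ℤ) : |f.symm v - v| ≤ C := by
  simpa [abs_sub_comm] using hC (f.symm v)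

theorem rightBelow_finite (hC : ∀ x, |f x - x| ≤ C) (p u : ℤ) : (rightBelow f p u).Finite :=
  (Set.finite_Icc p (u + C)).subset fun j ⟨hpj, hju⟩ => by
    have := abs_le.mp (hC j)
    exact ⟨hpj.le, by omega⟩

theorem leftAbove_finite (hC : ∀ x, |f x - x| ≤ C) (p u : ℤ) : (leftAbove f p u).Finite :=
  (Set.finite_Icc (u - C) p).subset fun j ⟨hjp, huj⟩ => by
    have := abs_le.mp (hC j)
    exact ⟨by omega, hjp⟩

theorem balance_symm (p u : ℤ) : balance f.symm u p = -balance f p u := by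
  have hR : f '' rightBelow f p u = leftAbove f.symm u p := by
    ext v
    simp only [rightBelow, leftAbove, Set.mem_image, Set.mem_ofPred_eq]
    exact ⟨by rintro ⟨j, hj, rfl⟩; simpa [and_comm] using hj,
      fun hv => ⟨f.symm v, by simpa [and_comm] using hv, by simp⟩⟩
  have hL : f '' leftAbove f p u = rightBelow f.symm u p := by
    ext v
    simp only [rightBelow, leftAbove, Set.mem_image, Set.mem_ofPred_eq]
    exact ⟨by rintro ⟨j, hj, rfl⟩; simpa [and_comm] using hj,
      fun hv => ⟨f.symm v, by simpa [and_comm] using hv, by simp⟩⟩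
  rw [balance, balance, ← hR, ← hL, Set.ncard_image_of_injective _ f.injective,
    Set.ncard_image_of_injective _ f.injective, neg_sub]

theorem balance_add_one_left (hC : ∀ x, |f x - x| ≤ C) (p u : ℤ) :
    balance f (p + 1) u = balance f p u - 1 := by
  by_cases h : f (p + 1) ≤ u
  · have hR : rightBelow f p u = insert (p + 1) (rightBelow f (p + 1) u) := by
      ext j
      simp only [rightBelow, Set.mem_insert_iff, Set.mem_ofPred_eq]
      grind
    have hL : leftAbove f (p + 1) u = leftAbove f p u := by
      ext j
      simp only [leftAbove, Set.mem_ofPred_eq]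
      grind
    rw [balance, balance, hR, hL, Set.ncard_insert_of_notMem (by simp [rightBelow])
      (rightBelow_finite hC _ _)]
    push_cast
    ring
  · have hR : rightBelow f (p + 1) u = rightBelow f p u := by
      ext j
      simp only [rightBelow, Set.mem_ofPred_eq]
      grind
    have hL : leftAbove f (p + 1) u = insert (p + 1) (leftAbove f p u) := by
      ext j
      simp only [leftAbove, Set.mem_insert_iff, Set.mem_ofPred_eq]
      grind
    rw [balance, balance, hR, hL, Set.ncard_insert_of_notMem (by simp [leftAbove])
      (leftAbove_finite hC _ _)]
    push_cast
    ring

theorem balance_add_one_right (hC : ∀ x, |f x - x| ≤ C) (p u : ℤ) :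
    balance f p (u + 1) = balance f p u + 1 := by
  have := balance_add_one_left (abs_symm_sub_le hC) u p
  rw [balance_symm, balance_symm] at this
  linarith

theorem balance_eq (hC : ∀ x, |f x - x| ≤ C) (p u : ℤ) :
    balance f p u = balance f 0 0 + (u - p) := by
  have hp := Int.eq_add_zsmul_of_forall_add_one (g := (balance f · u))
    (balance_add_one_left hC · u) p
  have hu := Int.eq_add_zsmul_of_forall_add_one (g := balance f 0) (balance_add_one_right hC 0) u
  simp only [smul_eq_mul] at hp hu
  rw [hp, hu]
  ring

def crossing (f : ℤ ≃ ℤ) (j p : ℤ) : ℤ :=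
  (if j ≤ p ∧ p < f j then 1 else 0) - (if p < j ∧ f j ≤ p then 1 else 0)

theorem sum_crossing_column (hC : ∀ x, |f x - x| ≤ C) (p : ℤ) :
    ∑ j ∈ Icc (p - C) (p + C), crossing f j p = -balance f p p := by
  have hL : leftAbove f p p = ↑({j ∈ Icc (p - C) (p + C) | j ≤ p ∧ p < f j}) := by
    ext j
    have := abs_le.mp (hC j)
    simp only [leftAbove, coe_filter, mem_Icc, Set.mem_ofPred_eq]
    omega
  have hR : rightBelow f p p = ↑({j ∈ Icc (p - C) (p + C) | p < j ∧ f j ≤ p}) := by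
    ext j
    have := abs_le.mp (hC j)
    simp only [rightBelow, coe_filter, mem_Icc, Set.mem_ofPred_eq]
    omega
  rw [balance, hL, hR, Set.ncard_coe_finset, Set.ncard_coe_finset, neg_sub]
  simp only [crossing, sum_sub_distrib, sum_boole]

theorem sum_crossing_row (hC : ∀ x, |f x - x| ≤ C) (j : ℤ) :
    ∑ p ∈ Icc (j - C) (j + C), crossing f j p = f j - j := by
  have := abs_le.mp (hC j)
  have hup : {p ∈ Icc (j - C) (j + C) | j ≤ p ∧ p < f j} = Ico j (f j) := by
    ext p
    simp only [mem_filter, mem_Icc, mem_Ico]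
    omega
  have hdown : {p ∈ Icc (j - C) (j + C) | p < j ∧ f j ≤ p} = Ico (f j) j := by
    ext p
    simp only [mem_filter, mem_Icc, mem_Ico]
    omega
  simp only [crossing, sum_sub_distrib, sum_boole, hup, hdown, Int.card_Ico]
  omega

/-- The code `cᵢ(f)`. -/
noncomputable def code (f : ℤ ≃ ℤ) (i : ℤ) : ℕ := {j | i < j ∧ f j < f i}.ncard

theorem code_lt_code (hC : ∀ x, |f x - x| ≤ C) {i j : ℤ} (hji : j < i) (hfij : f i < f j) :
    code f i < code f j := by
  have hsub : insert i {x | i < x ∧ f x < f i} ⊆ {x | j < x ∧ f x < f j} := by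
    rintro x (rfl | ⟨hix, hfx⟩)
    · exact ⟨hji, hfij⟩
    · exact ⟨hji.trans hix, hfx.trans hfij⟩
  have hfin : {x | j < x ∧ f x < f j}.Finite :=
    (rightBelow_finite hC j (f j)).subset fun x ⟨hjx, hfx⟩ => ⟨hjx, hfx.le⟩
  have := Set.ncard_le_ncard hsub hfin
  rw [Set.ncard_insert_of_notMem (by simp) (hfin.subset ((Set.subset_insert _ _).trans hsub))]
    at this
  exact this

theorem code_eq (hC : ∀ x, |f x - x| ≤ C) (hbal : ∀ p u, balance f p u = u - p) (i : ℤ) :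
    (code f i : ℤ) = f i - i + {j | j < i ∧ f i < f j}.ncard := by
  have hR : rightBelow f i (f i - 1) = {j | i < j ∧ f j < f i} := by
    ext j
    simp only [rightBelow, Set.mem_ofPred_eq]
    omega
  have hL : leftAbove f i (f i - 1) = insert i {j | j < i ∧ f i < f j} := by
    ext j
    simp only [leftAbove, Set.mem_insert_iff, Set.mem_ofPred_eq]
    constructor
    · rintro ⟨hji, hfj⟩
      rcases hji.lt_or_eq with hji | rfl
      · exact Or.inr ⟨hji, lt_of_le_of_ne (by omega) fun h => hji.ne' (f.injective h)⟩
      · exact Or.inl rfl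
    · rintro (rfl | ⟨hji, hfj⟩)
      · exact ⟨le_rfl, by omega⟩
      · exact ⟨hji.le, by omega⟩
  have h := hbal i (f i - 1)
  rw [balance, hR, hL, Set.ncard_insert_of_notMem (by simp)
    ((leftAbove_finite hC i (f i - 1)).subset (hL ▸ Set.subset_insert _ _))] at h
  rw [code]
  push_cast at h
  linarith

theorem sub_le_code (hC : ∀ x, |f x - x| ≤ C) (hbal : ∀ p u, balance f p u = u - p) (i : ℤ) :
    f i - i ≤ code f i := by
  rw [code_eq hC hbal]
  omega

theorem code_eq_sub_of_forall_code_le (hC : ∀ x, |f x - x| ≤ C)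
    (hbal : ∀ p u, balance f p u = u - p) {i : ℤ} (hmax : ∀ j, code f j ≤ code f i) :
    (code f i : ℤ) = f i - i := by
  have hempty : {j | j < i ∧ f i < f j} = ∅ :=
    Set.eq_empty_of_forall_notMem fun j ⟨hji, hfij⟩ =>
      (code_lt_code hC hji hfij).not_ge (hmax j)
  rw [code_eq hC hbal, hempty, Set.ncard_empty, Nat.cast_zero, add_zero]

section Periodic

variable {n : ℤ}

theorem symm_add_period (hf : ∀ i, f (i + n) = f i + n) (v : ℤ) :
    f.symm (v + n) = f.symm v + n :=
  f.injective (by simp [hf])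

theorem periodic_sub (hf : ∀ i, f (i + n) = f i + n) : Periodic (fun i => f i - i) n :=
  fun i => by simp only [hf]; ring

theorem exists_abs_sub_le (hn : 0 < n) (hf : ∀ i, f (i + n) = f i + n) :
    ∃ C, ∀ x, |f x - x| ≤ C := by
  refine ⟨∑ r ∈ Ico 0 n, |f r - r|, fun x => ?_⟩
  obtain ⟨r, hr, hxr⟩ := (periodic_sub hf).exists_mem_Ico₀ hn x
  rw [hxr]
  exact single_le_sum (f := fun r => |f r - r|) (fun _ _ => abs_nonneg _) (by simpa using hr)

theorem crossing_add_period (hf : ∀ i, f (i + n) = f i + n) (j p : ℤ) :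
    crossing f (j + n) (p + n) = crossing f j p := by
  simp only [crossing, hf, add_le_add_iff_right, add_lt_add_iff_right]

theorem balance_eq_sub (hn : 0 < n) (hf : ∀ i, f (i + n) = f i + n)
    (h0 : ∑ i ∈ Icc (1 : ℤ) n, (f i - i) = 0) (hC : ∀ x, |f x - x| ≤ C) (p u : ℤ) :
    balance f p u = u - p := by
  have hperiod : ∑ p ∈ Ico (1 : ℤ) (1 + n), -balance f p p = 0 := by
    rw [← h0, show Icc (1 : ℤ) n = Ico 1 (1 + n) by ext; simp only [mem_Icc, mem_Ico]; omega]
    simp only [← sum_crossing_column hC, ← sum_crossing_row hC]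
    exact sum_Ico_sum_Icc_comm_of_shift _ (crossing_add_period hf) 1 C
  have hconst : ∀ p, balance f p p = balance f 0 0 := fun p => by
    rw [balance_eq hC, sub_self, add_zero]
  simp only [hconst, sum_const, Int.card_Ico, smul_neg, nsmul_eq_mul, neg_eq_zero,
    mul_eq_zero] at hperiod
  rw [balance_eq hC, hperiod.resolve_left (by omega), zero_add]

theorem periodic_code (hf : ∀ i, f (i + n) = f i + n) : Periodic (fun i => (code f i : ℤ)) n := by
  intro i
  have himage : (· + n) '' {j | i < j ∧ f j < f i} = {j | i + n < j ∧ f j < f (i + n)} := by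
    ext x
    simp only [Set.mem_image, Set.mem_ofPred_eq]
    refine ⟨?_, fun hx => ⟨x - n, ?_, sub_add_cancel x n⟩⟩
    · rintro ⟨j, ⟨hij, hfj⟩, rfl⟩
      rw [hf, hf]
      omega
    · have := hf (x - n)
      rw [sub_add_cancel] at this
      rw [hf] at hx
      omega
  simp only [code, ← himage, Set.ncard_image_of_injective _ (add_left_injective n)]

theorem sup'_sub_eq_sup'_code (hn : 0 < n) (hf : ∀ i, f (i + n) = f i + n)
    (hC : ∀ x, |f x - x| ≤ C) (hbal : ∀ p u, balance f p u = u - p) (h : (Icc 1 n).Nonempty) :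
    (Icc 1 n).sup' h (fun i => f i - i) = (Icc 1 n).sup' h (fun i => (code f i : ℤ)) := by
  have hsub := (periodic_sub hf).isGreatest_range_sup' hn h
  have hcode := (periodic_code hf).isGreatest_range_sup' hn h
  obtain ⟨i₀, hi₀⟩ := hcode.1
  simp only at hi₀
  have hmax : ∀ j, code f j ≤ code f i₀ := fun j => by
    have := hcode.2 ⟨j, rfl⟩
    rw [← hi₀] at this
    exact Nat.cast_le.mp this
  refine le_antisymm (sup'_mono_fun fun i _ => sub_le_code hC hbal i) ?_
  rw [← hi₀, code_eq_sub_of_forall_code_le hC hbal hmax]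
  exact hsub.2 ⟨i₀, rfl⟩

theorem inf'_sub_eq_neg_sup'_symm (hn : 0 < n) (hf : ∀ i, f (i + n) = f i + n)
    (h : (Icc 1 n).Nonempty) :
    (Icc 1 n).inf' h (fun i => f i - i) = -(Icc 1 n).sup' h (fun v => f.symm v - v) := by
  have hsymm := (periodic_sub (symm_add_period hf)).isGreatest_range_sup' hn h
  refine ((periodic_sub hf).isLeast_range_inf' hn h).unique ⟨?_, ?_⟩
  · obtain ⟨v, hv⟩ := hsymm.1
    exact ⟨f.symm v, by simp [← hv]⟩
  · rintro _ ⟨x, rfl⟩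
    have := hsymm.2 ⟨f x, rfl⟩
    simp only [Equiv.symm_apply_apply] at this
    linarith

end Periodic

end AffinePerm

/-- For an affine permutation `f` of quasi-period `n` with
`∑_{i=1}^n (f i - i) = 0`, the maximum of `f i - i` over `i ∈ [1,n]` equals the
maximum of the code `cᵢ(f)`, and the minimum of `f i - i` equals minus the
maximum of the code of `f⁻¹`. -/
theorem stmt4 (n : ℕ) (hn : 1 ≤ n) (f : ℤ ≃ ℤ)
    (hf : ∀ i : ℤ, f (i + n) = f i + n)
    (h0 : ∑ i ∈ Finset.Icc (1 : ℤ) n, (f i - i) = 0) :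
    (Finset.Icc (1 : ℤ) n).sup'
        ⟨1, by rw [Finset.mem_Icc]; exact ⟨le_refl 1, by exact_mod_cast hn⟩⟩
        (fun i => f i - i) =
      (Finset.Icc (1 : ℤ) n).sup'
        ⟨1, by rw [Finset.mem_Icc]; exact ⟨le_refl 1, by exact_mod_cast hn⟩⟩
        (fun i => ({j : ℤ | i < j ∧ f j < f i}.ncard : ℤ)) ∧
    (Finset.Icc (1 : ℤ) n).inf'
        ⟨1, by rw [Finset.mem_Icc]; exact ⟨le_refl 1, by exact_mod_cast hn⟩⟩
        (fun i => f i - i) =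
      -(Finset.Icc (1 : ℤ) n).sup'
        ⟨1, by rw [Finset.mem_Icc]; exact ⟨le_refl 1, by exact_mod_cast hn⟩⟩
        (fun i => ({j : ℤ | i < j ∧ f.symm j < f.symm i}.ncard : ℤ)) := by
  have hn' : (0 : ℤ) < n := by exact_mod_cast hn
  obtain ⟨C, hC⟩ := AffinePerm.exists_abs_sub_le hn' hf
  have hbal := AffinePerm.balance_eq_sub hn' hf h0 hC
  have hbal_symm : ∀ p u, AffinePerm.balance f.symm p u = u - p := fun p u => by
    rw [AffinePerm.balance_symm, hbal, neg_sub]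
  exact ⟨AffinePerm.sup'_sub_eq_sup'_code hn' hf hC hbal _,
    (AffinePerm.inf'_sub_eq_neg_sup'_symm hn' hf _).trans <| congrArg Neg.neg <|
      AffinePerm.sup'_sub_eq_sup'_code hn' (AffinePerm.symm_add_period hf)
        (AffinePerm.abs_symm_sub_le hC) hbal_symm _⟩
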